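/- arXiv:math/0102050 — 5 statements merged into one kernel-verified Lean document; each statement's English description precedes it below -/
import Mathlib

section
/- Let p, q, r be positive integers and let b = gcd(pq, pr, qr). Then the abelianization of the triangle group Δ(p,q,r) = ⟨f, g, h ∣ f^r, g^p, h^q, fgh⟩ is a finite group of cardinality b. -/
/-- The relators of the triangle group Δ(p,q,r) = ⟨f, g, h ∣ f^r, g^p, h^q, fgh⟩,
where f, g, h are the generators indexed by 0, 1, 2 in `Fin 3`. -/
def triangleRels (p q r : ℕ) : Set (FreeGroup (Fin 3)) :=
  {FreeGroup.of 0 ^ r, FreeGroup.of 1 ^ p, FreeGroup.of 2 ^ q,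
    FreeGroup.of 0 * FreeGroup.of 1 * FreeGroup.of 2}

/-- The triangle group Δ(p,q,r) = ⟨f, g, h ∣ f^r, g^p, h^q, fgh⟩. -/
abbrev TriangleGroup (p q r : ℕ) : Type := PresentedGroup (triangleRels p q r)

/-!
In the abelianization the generator `f = (g h)⁻¹` is redundant, and what is left is
`ℤ/p × ℤ/q` (generated by `g` and `h`) modulo the diagonal element `(r, r)` coming from
`f ^ r`. Since `n • (r, r) = 0` iff `lcm p q ∣ n r`, that element has order
`lcm p q / gcd (lcm p q) r`, so the quotient has
`p q · gcd (lcm p q) r / lcm p q = gcd p q · gcd (lcm p q) r = gcd (pq, pr, qr)` elements.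
-/

theorem addOrderOf_natCast_prod (p q r : ℕ) :
    addOrderOf ((r : ZMod p), (r : ZMod q)) = addOrderOf (r : ZMod (Nat.lcm p q)) := by
  refine addOrderOf_eq_addOrderOf_iff.mpr fun n => ?_
  simp only [Prod.smul_mk, Prod.mk_eq_zero, nsmul_eq_mul, ← Nat.cast_mul,
    ZMod.natCast_eq_zero_iff, Nat.lcm_dvd_iff]

theorem Nat.gcd_mul_gcd_mul_mul (p q r : ℕ) :
    Nat.gcd (p * q) (Nat.gcd (p * r) (q * r)) = Nat.gcd p q * Nat.gcd (Nat.lcm p q) r := by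
  rw [Nat.gcd_mul_right, ← Nat.gcd_mul_lcm p q, Nat.gcd_mul_left]

theorem card_quotient_zmultiples_natCast_prod {p q : ℕ} (hp : p ≠ 0) (hq : q ≠ 0) (r : ℕ) :
    Nat.card ((ZMod p × ZMod q) ⧸ AddSubgroup.zmultiples ((r : ZMod p), (r : ZMod q))) =
      Nat.gcd (p * q) (Nat.gcd (p * r) (q * r)) := by
  have hL : 0 < Nat.lcm p q := Nat.pos_of_ne_zero (Nat.lcm_ne_zero hp hq)
  have hcard := AddSubgroup.card_eq_card_quotient_mul_card_addSubgroup
    (AddSubgroup.zmultiples ((r : ZMod p), (r : ZMod q)))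
  rw [Nat.card_prod, Nat.card_zmod, Nat.card_zmod, Nat.card_zmultiples,
    addOrderOf_natCast_prod, ZMod.addOrderOf_coe r hL.ne'] at hcard
  have hgcd : Nat.gcd (p * q) (Nat.gcd (p * r) (q * r)) *
      (Nat.lcm p q / Nat.gcd (Nat.lcm p q) r) = p * q := by
    rw [Nat.gcd_mul_gcd_mul_mul, mul_assoc, Nat.mul_div_cancel' (Nat.gcd_dvd_left _ r),
      Nat.gcd_mul_lcm]
  exact Nat.eq_of_mul_eq_mul_right
    (Nat.div_pos (Nat.gcd_le_left r hL) (Nat.gcd_pos_of_pos_left r hL)) (hcard.symm.trans hgcd.symm)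

namespace ZMod

variable {A : Type*} [AddGroup A] {n : ℕ}

def liftOfNsmulEqZero (a : A) (ha : n • a = 0) : ZMod n →+ A :=
  lift n ⟨zmultiplesHom A a, by simpa using ha⟩

@[simp]
theorem liftOfNsmulEqZero_intCast (a : A) (ha : n • a = 0) (k : ℤ) :
    liftOfNsmulEqZero a ha k = k • a :=
  lift_coe _ _ _

end ZMod

namespace TriangleGroup

variable (p q r : ℕ)

def abelianGen (i : Fin 3) : Abelianization (TriangleGroup p q r) :=
  .of (.of i)

theorem lift_abelianGen_eq_one {w : FreeGroup (Fin 3)} (hw : w ∈ triangleRels p q r) :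
    FreeGroup.lift (abelianGen p q r) w = 1 := by
  have : FreeGroup.lift (abelianGen p q r) = Abelianization.of.comp (PresentedGroup.mk _) :=
    FreeGroup.ext_hom _ _ fun _ => rfl
  rw [this, MonoidHom.comp_apply, PresentedGroup.one_of_mem hw, map_one]

theorem abelianGen_zero_pow : abelianGen p q r 0 ^ r = 1 := by
  simpa using lift_abelianGen_eq_one p q r (w := .of 0 ^ r) (by simp [triangleRels])

theorem abelianGen_one_pow : abelianGen p q r 1 ^ p = 1 := by
  simpa using lift_abelianGen_eq_one p q r (w := .of 1 ^ p) (by simp [triangleRels])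

theorem abelianGen_two_pow : abelianGen p q r 2 ^ q = 1 := by
  simpa using lift_abelianGen_eq_one p q r (w := .of 2 ^ q) (by simp [triangleRels])

theorem abelianGen_one_mul_abelianGen_two :
    abelianGen p q r 1 * abelianGen p q r 2 = (abelianGen p q r 0)⁻¹ := by
  refine eq_inv_of_mul_eq_one_right ?_
  simpa [mul_assoc] using
    lift_abelianGen_eq_one p q r (w := .of 0 * .of 1 * .of 2) (by simp [triangleRels])

abbrev AbelianModel : Type :=
  (ZMod p × ZMod q) ⧸ AddSubgroup.zmultiples ((r : ZMod p), (r : ZMod q))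

/-- `g ↦ (1, 0)`, `h ↦ (0, 1)` and `f ↦ (-1, -1)`: the relators `g ^ p`, `h ^ q` and `f g h`
hold already in `ZMod p × ZMod q`, and `f ^ r` is killed by the quotient. -/
def modelGen : Fin 3 → Multiplicative (AbelianModel p q r) :=
  ![.ofAdd ↑((-1, -1) : ZMod p × ZMod q), .ofAdd ↑((1, 0) : ZMod p × ZMod q),
    .ofAdd ↑((0, 1) : ZMod p × ZMod q)]

theorem lift_modelGen_eq_one :
    ∀ w ∈ triangleRels p q r, FreeGroup.lift (modelGen p q r) w = 1 := by
  rintro _ (rfl | rfl | rfl | rfl) <;>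
    simp only [map_pow, map_mul, FreeGroup.lift_apply_of, modelGen, Matrix.cons_val,
      ← ofAdd_nsmul, ← ofAdd_add, ← QuotientAddGroup.mk_nsmul, ← QuotientAddGroup.mk_add,
      ofAdd_eq_one, QuotientAddGroup.eq_zero_iff] <;>
    simp [Prod.smul_mk, Prod.mk_zero_zero, zero_mem]
  exact neg_mem (AddSubgroup.mem_zmultiples _)

def toModel : Abelianization (TriangleGroup p q r) →* Multiplicative (AbelianModel p q r) :=
  Abelianization.lift (PresentedGroup.toGroup (lift_modelGen_eq_one p q r))

theorem toModel_abelianGen (i : Fin 3) :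
    toModel p q r (abelianGen p q r i) = modelGen p q r i := by
  simp [toModel, abelianGen]

def prodToAbelianization : ZMod p × ZMod q →+ Additive (Abelianization (TriangleGroup p q r)) :=
  (ZMod.liftOfNsmulEqZero (.ofMul (abelianGen p q r 1))
      (by rw [← ofMul_pow, abelianGen_one_pow, ofMul_one])).coprod
    (ZMod.liftOfNsmulEqZero (.ofMul (abelianGen p q r 2))
      (by rw [← ofMul_pow, abelianGen_two_pow, ofMul_one]))

theorem prodToAbelianization_intCast (a b : ℤ) :
    prodToAbelianization p q r ((a : ZMod p), (b : ZMod q)) =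
      .ofMul (abelianGen p q r 1 ^ a * abelianGen p q r 2 ^ b) := by
  simp [prodToAbelianization]

theorem prodToAbelianization_diag :
    prodToAbelianization p q r ((r : ZMod p), (r : ZMod q)) = 0 := by
  have h := prodToAbelianization_intCast p q r r r
  rwa [Int.cast_natCast, Int.cast_natCast, zpow_natCast, zpow_natCast, ← mul_pow,
    abelianGen_one_mul_abelianGen_two, inv_pow, abelianGen_zero_pow, inv_one, ofMul_one] at h

def ofModel : Multiplicative (AbelianModel p q r) →* Abelianization (TriangleGroup p q r) :=
  AddMonoidHom.toMultiplicativeLeft <| QuotientAddGroup.lift _ (prodToAbelianization p q r) <| by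
    rw [AddSubgroup.zmultiples_le, AddMonoidHom.mem_ker]
    exact prodToAbelianization_diag p q r

theorem ofModel_ofAdd_intCast (a b : ℤ) :
    ofModel p q r (.ofAdd ↑((a : ZMod p), (b : ZMod q))) =
      abelianGen p q r 1 ^ a * abelianGen p q r 2 ^ b :=
  congrArg Additive.toMul (prodToAbelianization_intCast p q r a b)

theorem ofModel_modelGen (i : Fin 3) : ofModel p q r (modelGen p q r i) = abelianGen p q r i := by
  fin_cases i
  · simpa [modelGen, ← mul_inv, abelianGen_one_mul_abelianGen_two] using
      ofModel_ofAdd_intCast p q r (-1) (-1)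
  · simpa [modelGen] using ofModel_ofAdd_intCast p q r 1 0
  · simpa [modelGen] using ofModel_ofAdd_intCast p q r 0 1

theorem ofModel_comp_toModel : (ofModel p q r).comp (toModel p q r) = .id _ :=
  Abelianization.hom_ext _ _ <| PresentedGroup.ext fun i =>
    (congrArg _ (toModel_abelianGen p q r i)).trans (ofModel_modelGen p q r i)

theorem toModel_comp_ofModel : (toModel p q r).comp (ofModel p q r) = .id _ := by
  ext ⟨x, y⟩
  obtain ⟨a, rfl⟩ := ZMod.intCast_surjective x
  obtain ⟨b, rfl⟩ := ZMod.intCast_surjective y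
  change toModel p q r (ofModel p q r (.ofAdd ↑((a : ZMod p), (b : ZMod q)))) =
    .ofAdd ↑((a : ZMod p), (b : ZMod q))
  rw [ofModel_ofAdd_intCast, map_mul, map_zpow, map_zpow, toModel_abelianGen, toModel_abelianGen]
  simp [modelGen, ← ofAdd_zsmul, ← ofAdd_add, ← QuotientAddGroup.mk_zsmul,
    ← QuotientAddGroup.mk_add]

def abelianizationEquivModel :
    Abelianization (TriangleGroup p q r) ≃* Multiplicative (AbelianModel p q r) :=
  MonoidHom.toMulEquiv _ _ (ofModel_comp_toModel p q r) (toModel_comp_ofModel p q r)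

end TriangleGroup

theorem card_abelianization_triangleGroup_general (p q r : ℕ) (hp : 0 < p) (hq : 0 < q)
    (b : ℕ) (hb : b = Nat.gcd (p * q) (Nat.gcd (p * r) (q * r))) :
    Finite (Abelianization (TriangleGroup p q r)) ∧
      Nat.card (Abelianization (TriangleGroup p q r)) = b := by
  have : NeZero p := ⟨hp.ne'⟩
  have : NeZero q := ⟨hq.ne'⟩
  let e := TriangleGroup.abelianizationEquivModel p q r
  refine ⟨Finite.of_equiv _ e.symm.toEquiv, ?_⟩
  rw [Nat.card_congr e.toEquiv, hb]
  exact card_quotient_zmultiples_natCast_prod hp.ne' hq.ne' r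

theorem card_abelianization_triangleGroup (p q r : ℕ) (hp : 0 < p) (hq : 0 < q) (hr : 0 < r)
    (b : ℕ) (hb : b = Nat.gcd (p * q) (Nat.gcd (p * r) (q * r))) :
    Finite (Abelianization (TriangleGroup p q r)) ∧
      Nat.card (Abelianization (TriangleGroup p q r)) = b :=
  card_abelianization_triangleGroup_general p q r hp hq b hb
end

section
/- Let p and q be odd integers with p, q ≥ 3 and let m ≥ 2 be an integer such that 1/p + 1/q + 1/m < 1. Set b = gcd(pq, pm, qm). Then (p − ⌊p/2⌋ − 1)(q − ⌊q/2⌋ − 1)(m − ⌊m/2⌋ − 1) + ⌊p/2⌋·⌊q/2⌋·⌊m/2⌋ + ⌊gcd(p,q)/2⌋ + ⌊gcd(p,m)/2⌋ + ⌊gcd(q,m)/2⌋ + 1 − (⌊b/2⌋ + 1) ≥ 3. -/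
/-!
Write `p = 2P + 1`, `q = 2Q + 1`, `g = gcd(p, q)`. The first two summands add up to
`P Q (m - 1)`, and `b = gcd(pq, gcd(p, q) m)` is odd and divides `g m`. For `m = 2` this forces
`b ∣ g`, and hyperbolicity gives `P Q ≥ 3`. For `m ≥ 3` the bound `b ≤ g m` suffices as soon as
`⌊g/2⌋ + 2 ≤ P Q`, which holds unless `p = q = 3`; in that case `m ≥ 4` and `b ∣ 9`, and `b = 9`
forces `3 ∣ m`, so that the terms `⌊gcd(3, m)/2⌋` compensate.
-/

namespace Int

lemma odd_of_dvd_odd {a n : ℤ} (hn : Odd n) (h : a ∣ n) : Odd a := by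
  obtain ⟨c, rfl⟩ := h
  exact (Int.odd_mul.mp hn).1

lemma sub_ediv_two_sub_one_of_odd {n : ℤ} (hn : Odd n) : n - n / 2 - 1 = n / 2 := by
  have := Int.two_mul_ediv_two_add_one_of_odd hn
  omega

lemma dvd_of_dvd_mul_two_of_odd {a n : ℤ} (ha : Odd a) (h : a ∣ n * 2) : a ∣ n := by
  obtain ⟨k, rfl⟩ := ha
  exact IsCoprime.dvd_of_dvd_mul_right ⟨1, -k, by ring⟩ h

lemma gcd_mul_gcd_mul_dvd (p q m : ℤ) :
    (Int.gcd (p * q) (Int.gcd (p * m) (q * m)) : ℤ) ∣ Int.gcd p q * m := by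
  refine (Int.gcd_dvd_right _ _).trans ?_
  rw [Int.gcd_mul_right, Nat.cast_mul, Int.natCast_natAbs]
  exact mul_dvd_mul_left _ (abs_dvd_self m)

end Int

lemma mul_add_mul_add_mul_lt_of_inv_add_inv_add_inv_lt_one {p q m : ℤ} (hp : 0 < p) (hq : 0 < q)
    (hm : 0 < m) (h : (1 : ℚ) / p + 1 / q + 1 / m < 1) : q * m + p * m + p * q < p * q * m := by
  have hp' : (0 : ℚ) < p := by exact_mod_cast hp
  have hq' : (0 : ℚ) < q := by exact_mod_cast hq
  have hm' : (0 : ℚ) < m := by exact_mod_cast hm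
  rw [div_add_div _ _ hp'.ne' hq'.ne', div_add_div _ _ (by positivity) hm'.ne',
    div_lt_one (by positivity)] at h
  exact_mod_cast (by push_cast; linarith : ((q * m + p * m + p * q : ℤ) : ℚ) < (p * q * m : ℤ))

lemma three_le_ediv_two_mul_ediv_two {p q : ℤ} (hp : Odd p) (hq : Odd q) (hp0 : 0 < p)
    (hq0 : 0 < q) (h : 2 * (p + q) < p * q) : 3 ≤ p / 2 * (q / 2) := by
  have hP := Int.two_mul_ediv_two_add_one_of_odd hp
  have hQ := Int.two_mul_ediv_two_add_one_of_odd hq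
  generalize p / 2 = P at hP
  generalize q / 2 = Q at hQ
  subst hP hQ
  have hP1 : 1 ≤ P := by nlinarith
  have hQ1 : 1 ≤ Q := by nlinarith
  nlinarith [mul_nonneg (by omega : 0 ≤ P - 1) (by omega : 0 ≤ Q - 1)]

lemma gcd_three_ediv_two_add_two_le {p : ℤ} (hp : Odd p) (hp5 : 5 ≤ p) :
    (Int.gcd p 3 : ℤ) / 2 + 2 ≤ p / 2 := by
  have hg : (Int.gcd p 3 : ℤ) ∣ 3 := Int.gcd_dvd_right p 3
  have hg3 : (Int.gcd p 3 : ℤ) ≤ 3 := Int.le_of_dvd (by norm_num) hg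
  have hgodd := Int.odd_iff.mp (Int.odd_of_dvd_odd (by decide) hg)
  have hP := Int.two_mul_ediv_two_add_one_of_odd hp
  by_cases h3 : (Int.gcd p 3 : ℤ) = 3
  · have h3p : (3 : ℤ) ∣ p := h3 ▸ Int.gcd_dvd_left p 3
    omega
  · omega

lemma gcd_ediv_two_add_two_le {p q : ℤ} (hp : Odd p) (hq : Odd q) (hp3 : 3 ≤ p) (hq3 : 3 ≤ q)
    (hpq : ¬(p = 3 ∧ q = 3)) : (Int.gcd p q : ℤ) / 2 + 2 ≤ p / 2 * (q / 2) := by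
  have hP := Int.two_mul_ediv_two_add_one_of_odd hp
  have hQ := Int.two_mul_ediv_two_add_one_of_odd hq
  by_cases hp' : p = 3
  · subst hp'
    rw [Int.gcd_comm]
    have := gcd_three_ediv_two_add_two_le hq (by omega)
    omega
  by_cases hq' : q = 3
  · subst hq'
    have := gcd_three_ediv_two_add_two_le hp (by omega)
    omega
  have hgp : (Int.gcd p q : ℤ) ≤ p := Int.le_of_dvd (by omega) (Int.gcd_dvd_left p q)
  have hgP : (Int.gcd p q : ℤ) / 2 ≤ p / 2 := by omega
  have hP2 : 2 ≤ p / 2 := by omega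
  have hQ2 : 2 ≤ q / 2 := by omega
  generalize p / 2 = P at *
  generalize q / 2 = Q at *
  nlinarith

lemma ediv_two_add_three_le {n g m b : ℤ} (hg : Odd g) (hb : Odd b) (hm : 3 ≤ m)
    (hbg : b ≤ g * m) (hn : g / 2 + 2 ≤ n) : b / 2 + 3 ≤ n * (m - 1) + g / 2 := by
  have hG := Int.two_mul_ediv_two_add_one_of_odd hg
  have hB := Int.two_mul_ediv_two_add_one_of_odd hb
  nlinarith [mul_nonneg (by omega : 0 ≤ n - g / 2 - 2) (by omega : (0 : ℤ) ≤ m - 1)]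

lemma ediv_two_add_three_le_of_dvd_nine {m b : ℤ} (hm : 4 ≤ m) (hb : 0 < b) (hb9 : b ∣ 9)
    (hbm : b ∣ 3 * m) : b / 2 + 3 ≤ m + 2 * ((Int.gcd 3 m : ℤ) / 2) := by
  have hb9' : b ≤ 9 := Int.le_of_dvd (by norm_num) hb9
  have hg : 0 ≤ (Int.gcd 3 m : ℤ) := Int.natCast_nonneg _
  by_cases h9 : b = 9
  · subst h9
    have h3m : (3 : ℤ) ∣ m := by omega
    rw [Int.gcd_eq_left (by norm_num) h3m]
    omega
  · interval_cases b <;> omega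

theorem at_least_three_irreducible_characters (p q m : ℤ)
    (hpodd : Odd p) (hqodd : Odd q) (hp : 3 ≤ p) (hq : 3 ≤ q) (hm : 2 ≤ m)
    (hhyp : (1 : ℚ) / p + 1 / q + 1 / m < 1)
    (b : ℤ) (hb : b = Int.gcd (p * q) (Int.gcd (p * m) (q * m))) :
    (p - p / 2 - 1) * (q - q / 2 - 1) * (m - m / 2 - 1) +
        (p / 2) * (q / 2) * (m / 2) +
        (Int.gcd p q : ℤ) / 2 + (Int.gcd p m : ℤ) / 2 + (Int.gcd q m : ℤ) / 2 + 1 -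
        (b / 2 + 1) ≥ 3 := by
  have hyperbolic := mul_add_mul_add_mul_lt_of_inv_add_inv_add_inv_lt_one (by omega) (by omega)
    (by omega) hhyp
  have hbpq : b ∣ p * q := hb ▸ Int.gcd_dvd_left _ _
  have hbgm : b ∣ Int.gcd p q * m := hb ▸ Int.gcd_mul_gcd_mul_dvd p q m
  have hbodd : Odd b := Int.odd_of_dvd_odd (Int.odd_mul.mpr ⟨hpodd, hqodd⟩) hbpq
  have hg : Odd (Int.gcd p q : ℤ) := Int.odd_of_dvd_odd hpodd (Int.gcd_dvd_left p q)
  have hg0 : 0 < (Int.gcd p q : ℤ) :=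
    Int.natCast_pos.mpr (Int.gcd_pos_of_ne_zero_left _ (by omega))
  have hgm : 0 ≤ (Int.gcd p m : ℤ) / 2 := by positivity
  have hgq : 0 ≤ (Int.gcd q m : ℤ) / 2 := by positivity
  suffices key : b / 2 + 3 ≤ p / 2 * (q / 2) * (m - 1) + (Int.gcd p q : ℤ) / 2 +
      (Int.gcd p m : ℤ) / 2 + (Int.gcd q m : ℤ) / 2 by
    rw [Int.sub_ediv_two_sub_one_of_odd hpodd, Int.sub_ediv_two_sub_one_of_odd hqodd]
    linarith [show p / 2 * (q / 2) * (m - m / 2 - 1) + p / 2 * (q / 2) * (m / 2) =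
      p / 2 * (q / 2) * (m - 1) by ring]
  obtain rfl | hm3 := hm.eq_or_lt
  · have hbg : b ≤ Int.gcd p q := Int.le_of_dvd hg0 (Int.dvd_of_dvd_mul_two_of_odd hbodd hbgm)
    have := three_le_ediv_two_mul_ediv_two hpodd hqodd (by omega) (by omega) (by linarith)
    omega
  by_cases hpq : p = 3 ∧ q = 3
  · obtain ⟨rfl, rfl⟩ := hpq
    have hb0 : 0 < b := hb ▸ Int.natCast_pos.mpr (Int.gcd_pos_of_ne_zero_left _ (by norm_num))
    have := ediv_two_add_three_le_of_dvd_nine (m := m) (by omega) hb0 hbpq (by simpa using hbgm)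
    rw [Int.gcd_self]
    omega
  have := ediv_two_add_three_le hg hbodd hm3 (Int.le_of_dvd (by positivity) hbgm)
    (gcd_ediv_two_add_two_le hpodd hqodd hp hq hpq)
  omega
end

section
/- Let p be an odd positive integer and let m ≥ 1 and n be integers. The group with presentation ⟨y, z ∣ (yz⁻¹)^m, (zy)^p, (zy)^{(p+1)/2} y (zy)^{−(p+1)/2} z⁻¹, y^n⟩ is isomorphic to the group with presentation ⟨w, y ∣ w^p, y^n, (wy)², (y²w²)^m⟩, via the map sending y to y and z to w⁻²y⁻¹, whose inverse sends y to y and w to (zy)^{(p−1)/2}. -/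
/-- Relators of ⟨y, z ∣ (yz⁻¹)^m, (zy)^p, (zy)^((p+1)/2) y (zy)^(−(p+1)/2) z⁻¹, y^n⟩,
with y, z the generators indexed by 0, 1 in `Fin 2`. -/
def relsYZ (p m : ℕ) (n : ℤ) : Set (FreeGroup (Fin 2)) :=
  letI y : FreeGroup (Fin 2) := FreeGroup.of 0
  letI z : FreeGroup (Fin 2) := FreeGroup.of 1
  {(y * z⁻¹) ^ m, (z * y) ^ p,
    (z * y) ^ ((p + 1) / 2) * y * ((z * y) ^ ((p + 1) / 2))⁻¹ * z⁻¹, y ^ n}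

/-- Relators of Coxeter's group (2, p, |n|; m) = ⟨w, y ∣ w^p, y^n, (wy)², (y²w²)^m⟩,
with w, y the generators indexed by 0, 1 in `Fin 2`. -/
def relsWY (p m : ℕ) (n : ℤ) : Set (FreeGroup (Fin 2)) :=
  letI w : FreeGroup (Fin 2) := FreeGroup.of 0
  letI y : FreeGroup (Fin 2) := FreeGroup.of 1
  {w ^ p, y ^ n, (w * y) ^ 2, (y ^ 2 * w ^ 2) ^ m}

/-!
Write p = 2t + 1. In the Coxeter group, z := w⁻²y⁻¹ gives zy = w⁻², and since w has order dividing
2t + 1, (w⁻²)^t = w and (w⁻²)^(t+1) = w⁻¹; the conjugation relator then becomes w⁻²(wy)²w² = 1.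
Conversely, with w := (zy)^t one has w² = (zy)⁻¹, so y²w² = yz⁻¹, and the conjugation relator
(zy)^(t+1) y = z (zy)^(t+1) gives wy = y⁻¹(zy)^(t+1), whence (wy)² = (zy)^(2t+1) = 1.
The two substitutions are mutually inverse on generators.
-/

namespace PresentedGroup

variable {α β : Type*}

theorem forall_lift_of_eq_one {rels : Set (FreeGroup α)} :
    ∀ r ∈ rels, FreeGroup.lift (of : α → PresentedGroup rels) r = 1 := by
  have hlift : FreeGroup.lift (of : α → PresentedGroup rels) = mk rels :=
    FreeGroup.ext_hom _ _ fun _ => FreeGroup.lift_apply_of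
  intro r hr
  rw [hlift]
  exact one_of_mem hr

theorem exists_mulEquiv_of_toGroup_eq_of {rels₁ : Set (FreeGroup α)} {rels₂ : Set (FreeGroup β)}
    (f : α → PresentedGroup rels₂) (g : β → PresentedGroup rels₁)
    (hf : ∀ r ∈ rels₁, FreeGroup.lift f r = 1) (hg : ∀ r ∈ rels₂, FreeGroup.lift g r = 1)
    (hgf : ∀ a, toGroup hg (f a) = of a) (hfg : ∀ b, toGroup hf (g b) = of b) :
    ∃ φ : PresentedGroup rels₁ ≃* PresentedGroup rels₂,
      (∀ a, φ (of a) = f a) ∧ ∀ b, φ.symm (of b) = g b :=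
  ⟨(toGroup hf).toMulEquiv (toGroup hg) (ext fun a => by simp [toGroup.of, hgf])
      (ext fun b => by simp [toGroup.of, hfg]),
    fun _ => toGroup.of hf, fun _ => toGroup.of hg⟩

end PresentedGroup

section Relators

variable {G : Type*} [Group G] (t m : ℕ) (n : ℤ)

theorem forall_relsYZ_lift_eq_one_iff (f : Fin 2 → G) :
    (∀ r ∈ relsYZ (2 * t + 1) m n, FreeGroup.lift f r = 1) ↔
      (f 0 * (f 1)⁻¹) ^ m = 1 ∧ (f 1 * f 0) ^ (2 * t + 1) = 1 ∧
        (f 1 * f 0) ^ (t + 1) * f 0 * ((f 1 * f 0) ^ (t + 1))⁻¹ * (f 1)⁻¹ = 1 ∧ f 0 ^ n = 1 := by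
  have ht : (2 * t + 1 + 1) / 2 = t + 1 := by omega
  simp [relsYZ, ht]

theorem forall_relsWY_lift_eq_one_iff (f : Fin 2 → G) :
    (∀ r ∈ relsWY (2 * t + 1) m n, FreeGroup.lift f r = 1) ↔
      f 0 ^ (2 * t + 1) = 1 ∧ f 1 ^ n = 1 ∧ (f 0 * f 1) ^ 2 = 1 ∧
        (f 1 ^ 2 * f 0 ^ 2) ^ m = 1 := by
  simp [relsWY]

end Relators

section Group

variable {G : Type*} [Group G] {t m : ℕ} {n : ℤ}

theorem pow_sq_eq_inv_of_pow_eq_one {x : G} (hx : x ^ (2 * t + 1) = 1) : (x ^ t) ^ 2 = x⁻¹ := by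
  rw [← pow_mul, mul_comm]
  exact eq_inv_of_mul_eq_one_left (by rwa [← pow_succ])

theorem zpow_neg_two_pow_eq_self_of_pow_eq_one {x : G} (hx : x ^ (2 * t + 1) = 1) :
    (x ^ (-2 : ℤ)) ^ t = x := by
  rw [zpow_neg, zpow_ofNat, inv_pow, ← pow_mul, mul_comm, pow_mul, pow_sq_eq_inv_of_pow_eq_one hx,
    inv_inv]

theorem zpow_neg_two_mul_inv_eq_of_pow_eq_one {y z : G} (hzy : (z * y) ^ (2 * t + 1) = 1) :
    ((z * y) ^ t) ^ (-2 : ℤ) * y⁻¹ = z := by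
  rw [zpow_neg, zpow_ofNat, pow_sq_eq_inv_of_pow_eq_one hzy, inv_inv, mul_inv_cancel_right]

theorem conj_relator_of_coxeter {w y : G} (hw : w ^ (2 * t + 1) = 1) (hwy : (w * y) ^ 2 = 1) :
    (w ^ (-2 : ℤ) * y⁻¹ * y) ^ (t + 1) * y * ((w ^ (-2 : ℤ) * y⁻¹ * y) ^ (t + 1))⁻¹ *
      (w ^ (-2 : ℤ) * y⁻¹)⁻¹ = 1 := by
  have hpow : (w ^ (-2 : ℤ) * y⁻¹ * y) ^ (t + 1) = w⁻¹ := by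
    rw [inv_mul_cancel_right, pow_succ, zpow_neg_two_pow_eq_self_of_pow_eq_one hw]
    group
  calc _ = w ^ (-2 : ℤ) * (w * y) ^ 2 * w ^ 2 := by rw [hpow, sq]; group
    _ = 1 := by rw [hwy]; group

theorem coxeter_relator_of_conj_relator {y z : G} (hzy : (z * y) ^ (2 * t + 1) = 1)
    (hconj : (z * y) ^ (t + 1) * y * ((z * y) ^ (t + 1))⁻¹ * z⁻¹ = 1) :
    ((z * y) ^ t * y) ^ 2 = 1 := by
  have hcomm : (z * y) ^ (t + 1) * y = z * (z * y) ^ (t + 1) :=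
    mul_inv_eq_iff_eq_mul.mp (mul_inv_eq_one.mp hconj)
  have hwy : (z * y) ^ t * y = y⁻¹ * (z * y) ^ (t + 1) := by
    calc _ = (z * y)⁻¹ * ((z * y) ^ (t + 1) * y) := by
          rw [pow_succ', mul_assoc, inv_mul_cancel_left]
      _ = y⁻¹ * (z * y) ^ (t + 1) := by rw [hcomm, mul_inv_rev, mul_assoc, inv_mul_cancel_left]
  calc ((z * y) ^ t * y) ^ 2 = (z * y) ^ t * (y * ((z * y) ^ t * y)) := by rw [sq, mul_assoc]
    _ = (z * y) ^ (2 * t + 1) := by rw [hwy, mul_inv_cancel_left, ← pow_add, two_mul, add_assoc]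
    _ = 1 := hzy


theorem relsYZ_lift_eq_one_of_coxeter {w y : G} (hw : w ^ (2 * t + 1) = 1) (hy : y ^ n = 1)
    (hwy : (w * y) ^ 2 = 1) (hm : (y ^ 2 * w ^ 2) ^ m = 1) :
    ∀ r ∈ relsYZ (2 * t + 1) m n, FreeGroup.lift ![y, w ^ (-2 : ℤ) * y⁻¹] r = 1 := by
  rw [forall_relsYZ_lift_eq_one_iff]
  simp only [Matrix.cons_val_zero, Matrix.cons_val_one]
  refine ⟨?_, ?_, conj_relator_of_coxeter hw hwy, hy⟩
  · rwa [show y * (w ^ (-2 : ℤ) * y⁻¹)⁻¹ = y ^ 2 * w ^ 2 by rw [sq]; group]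
  · rw [show w ^ (-2 : ℤ) * y⁻¹ * y = (w ^ 2)⁻¹ by group, inv_pow, ← pow_mul, mul_comm, pow_mul,
      hw, one_pow, inv_one]

theorem relsWY_lift_eq_one_of_relsYZ {y z : G} (hm : (y * z⁻¹) ^ m = 1)
    (hzy : (z * y) ^ (2 * t + 1) = 1)
    (hconj : (z * y) ^ (t + 1) * y * ((z * y) ^ (t + 1))⁻¹ * z⁻¹ = 1) (hy : y ^ n = 1) :
    ∀ r ∈ relsWY (2 * t + 1) m n, FreeGroup.lift ![(z * y) ^ t, y] r = 1 := by
  rw [forall_relsWY_lift_eq_one_iff]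
  simp only [Matrix.cons_val_zero, Matrix.cons_val_one]
  refine ⟨by rw [← pow_mul, mul_comm, pow_mul, hzy, one_pow], hy,
    coxeter_relator_of_conj_relator hzy hconj, ?_⟩
  rwa [pow_sq_eq_inv_of_pow_eq_one hzy, show y ^ 2 * (z * y)⁻¹ = y * z⁻¹ by group]

end Group

theorem presentedGroup_iso_coxeter_general (p m : ℕ) (hp : Odd p) (n : ℤ) :
    ∃ φ : PresentedGroup (relsYZ p m n) ≃* PresentedGroup (relsWY p m n),
      φ (PresentedGroup.of 0) = PresentedGroup.of 1 ∧
      φ (PresentedGroup.of 1) =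
        (PresentedGroup.of 0 : PresentedGroup (relsWY p m n)) ^ (-2 : ℤ) *
          (PresentedGroup.of 1)⁻¹ ∧
      φ.symm (PresentedGroup.of 1) = PresentedGroup.of 0 ∧
      φ.symm (PresentedGroup.of 0) =
        ((PresentedGroup.of 1 : PresentedGroup (relsYZ p m n)) *
          PresentedGroup.of 0) ^ ((p - 1) / 2) := by
  obtain ⟨t, rfl⟩ := hp
  rw [show (2 * t + 1 - 1) / 2 = t by omega]
  obtain ⟨hw, hyW, hwy, hm⟩ :=
    (forall_relsWY_lift_eq_one_iff t m n _).1 PresentedGroup.forall_lift_of_eq_one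
  obtain ⟨hmZ, hzy, hconj, hyZ⟩ :=
    (forall_relsYZ_lift_eq_one_iff t m n _).1 PresentedGroup.forall_lift_of_eq_one
  obtain ⟨φ, hφ, hφsymm⟩ := PresentedGroup.exists_mulEquiv_of_toGroup_eq_of _ _
    (relsYZ_lift_eq_one_of_coxeter hw hyW hwy hm) (relsWY_lift_eq_one_of_relsYZ hmZ hzy hconj hyZ)
    (Fin.forall_fin_two.2 ⟨by simp [PresentedGroup.toGroup.of],
      by simpa [PresentedGroup.toGroup.of] using zpow_neg_two_mul_inv_eq_of_pow_eq_one hzy⟩)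
    (Fin.forall_fin_two.2 ⟨by simpa [PresentedGroup.toGroup.of] using
      zpow_neg_two_pow_eq_self_of_pow_eq_one hw, by simp [PresentedGroup.toGroup.of]⟩)
  exact ⟨φ, hφ 0, hφ 1, hφsymm 1, hφsymm 0⟩

theorem presentedGroup_iso_coxeter (p m : ℕ) (hp : Odd p) (hppos : 0 < p) (hm : 1 ≤ m)
    (n : ℤ) :
    ∃ φ : PresentedGroup (relsYZ p m n) ≃* PresentedGroup (relsWY p m n),
      φ (PresentedGroup.of 0) = PresentedGroup.of 1 ∧
      φ (PresentedGroup.of 1) =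
        (PresentedGroup.of 0 : PresentedGroup (relsWY p m n)) ^ (-2 : ℤ) *
          (PresentedGroup.of 1)⁻¹ ∧
      φ.symm (PresentedGroup.of 1) = PresentedGroup.of 0 ∧
      φ.symm (PresentedGroup.of 0) =
        ((PresentedGroup.of 1 : PresentedGroup (relsYZ p m n)) *
          PresentedGroup.of 0) ^ ((p - 1) / 2) :=
  presentedGroup_iso_coxeter_general p m hp n
end

section
/- Let q ≥ 9 be an odd integer, let a₁, a₂, a₃, a₄, a₅, a₆ be nonnegative integers, and let S be a rational number such that: S = 2(a₁ + a₂ + a₃ + ((q−3)/2)a₄ + a₅ + a₆); S = 2((2q+5)a₁ + (2q−9)a₂ + (2q−10)a₃ + ((q−5)/2)a₄ + 5a₅ + 7a₆); and S ≤ 2((2q+4)a₁ + (2q−10)a₂ + (2q−11)a₃ + a₄ + 6a₅ + 8a₆). Then a₁ = a₂ = a₃ = a₄ = a₅ = a₆ = 0 (and hence S = 0). -/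
theorem no_cyclic_surgery_norm_contradiction (q : ℤ) (hqodd : Odd q) (hq : 9 ≤ q)
    (a₁ a₂ a₃ a₄ a₅ a₆ : ℕ) (S : ℚ)
    (h1 : S = 2 * (a₁ + a₂ + a₃ + ((q - 3) / 2 : ℚ) * a₄ + a₅ + a₆))
    (h2 : S = 2 * ((2 * q + 5) * a₁ + (2 * q - 9) * a₂ + (2 * q - 10) * a₃ +
      ((q - 5) / 2 : ℚ) * a₄ + 5 * a₅ + 7 * a₆))
    (h3 : S ≤ 2 * ((2 * q + 4) * a₁ + (2 * q - 10) * a₂ + (2 * q - 11) * a₃ +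
      (a₄ : ℚ) + 6 * a₅ + 8 * a₆)) :
    a₁ = 0 ∧ a₂ = 0 ∧ a₃ = 0 ∧ a₄ = 0 ∧ a₅ = 0 ∧ a₆ = 0 ∧ S = 0 := by
  have hq' : (9 : ℚ) ≤ (q : ℤ) := by exact_mod_cast hq
  have b1 : (0:ℚ) ≤ a₁ := Nat.cast_nonneg _
  have b2 : (0:ℚ) ≤ a₂ := Nat.cast_nonneg _
  have b3 : (0:ℚ) ≤ a₃ := Nat.cast_nonneg _
  have b4 : (0:ℚ) ≤ a₄ := Nat.cast_nonneg _
  have b5 : (0:ℚ) ≤ a₅ := Nat.cast_nonneg _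
  have b6 : (0:ℚ) ≤ a₆ := Nat.cast_nonneg _
  -- E1 : a₄ = (2q+4)a₁+(2q-10)a₂+(2q-11)a₃+4a₅+6a₆
  have E1 : (a₄ : ℚ) = (2*(q:ℚ)+4)*a₁ + (2*q-10)*a₂ + (2*q-11)*a₃ + 4*a₅ + 6*a₆ := by
    have := h1.symm.trans h2
    linarith
  -- E2 : a₁+a₂+a₃+((q-7)/2)a₄ ≤ a₅+a₆
  have E2 : (a₁:ℚ) + a₂ + a₃ + (((q:ℚ)-7)/2) * a₄ ≤ a₅ + a₆ := by
    rw [h2] at h3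
    linarith
  have key : (a₁:ℚ) + a₂ + a₃ + a₄ + a₅ + a₆ ≤ 0 := by
    nlinarith [mul_nonneg (by linarith : (0:ℚ) ≤ (q:ℚ) - 9) b1,
      mul_nonneg (by linarith : (0:ℚ) ≤ (q:ℚ) - 9) b2,
      mul_nonneg (by linarith : (0:ℚ) ≤ (q:ℚ) - 9) b3,
      mul_nonneg (by linarith : (0:ℚ) ≤ (q:ℚ) - 9) b4]
  have z1 : (a₁:ℚ) = 0 := by linarith
  have z2 : (a₂:ℚ) = 0 := by linarith
  have z3 : (a₃:ℚ) = 0 := by linarith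
  have z4 : (a₄:ℚ) = 0 := by linarith
  have z5 : (a₅:ℚ) = 0 := by linarith
  have z6 : (a₆:ℚ) = 0 := by linarith
  refine ⟨by exact_mod_cast z1, by exact_mod_cast z2, by exact_mod_cast z3,
    by exact_mod_cast z4, by exact_mod_cast z5, by exact_mod_cast z6, ?_⟩
  rw [h1, z1, z2, z3, z4, z5, z6]; ring
end

section
/- Let P ⊆ ℝ² be a convex set containing the origin, and let a be an integer such that (2a+1, 1) ∈ P, (2a, 1) ∉ P, and (2a+2, 1) ∉ P. Then every point (c, d) ∈ P with d ≥ 1 satisfies 2a < c/d < 2a+2. -/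
/-! The horizontal line `y = 1` meets `P` in an interval containing `2a + 1` but neither `2a` nor
`2a + 2`, so this interval lies in `(2a, 2a + 2)`. Since `0 ∈ P`, shrinking `(c, d)` towards the
origin by the factor `1 / d ≤ 1` stays in `P` and lands at `(c / d, 1)` on that line. -/

open Set

theorem Set.OrdConnected.subset_Ioo_of_notMem {α : Type*} [LinearOrder α] {s : Set α}
    (hs : s.OrdConnected) {l b u : α} (hb : b ∈ s) (hlb : l ≤ b) (hbu : b ≤ u)
    (hl : l ∉ s) (hu : u ∉ s) : s ⊆ Ioo l u := by
  intro x hx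
  constructor
  · by_contra! hxl
    exact hl (hs.out hx hb ⟨hxl, hlb⟩)
  · by_contra! hux
    exact hu (hs.out hb hx ⟨hbu, hux⟩)

theorem Convex.preimage_prodMk_left {𝕜 E F : Type*} [Semiring 𝕜] [PartialOrder 𝕜]
    [AddCommMonoid E] [AddCommMonoid F] [Module 𝕜 E] [Module 𝕜 F] {s : Set (E × F)}
    (hs : Convex 𝕜 s) (y : F) : Convex 𝕜 ((·, y) ⁻¹' s) := by
  intro x₁ hx₁ x₂ hx₂ t₁ t₂ ht₁ ht₂ ht
  convert hs hx₁ hx₂ ht₁ ht₂ ht using 1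
  simp [← add_smul, ht]

theorem convex_locates_boundary_slope (P : Set (ℝ × ℝ)) (hP : Convex ℝ P)
    (h0 : (0, 0) ∈ P) (a : ℤ)
    (hin : ((2 * a + 1 : ℝ), 1) ∈ P)
    (hout₁ : ((2 * a : ℝ), 1) ∉ P)
    (hout₂ : ((2 * a + 2 : ℝ), 1) ∉ P) :
    ∀ c d : ℝ, (c, d) ∈ P → 1 ≤ d → (2 * a : ℝ) < c / d ∧ c / d < 2 * a + 2 := by
  intro c d hcd hd
  have hd₀ : 0 < d := one_pos.trans_le hd
  have hslope : (c / d, (1 : ℝ)) ∈ P := by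
    have hscale : d⁻¹ ∈ Icc (0 : ℝ) 1 := ⟨inv_nonneg.2 hd₀.le, inv_le_one_of_one_le₀ hd⟩
    convert hP.smul_mem_of_zero_mem h0 hcd hscale using 1
    simp [div_eq_inv_mul, hd₀.ne']
  have hline := (hP.preimage_prodMk_left (1 : ℝ)).ordConnected.subset_Ioo_of_notMem
    (show (2 * a + 1 : ℝ) ∈ (·, (1 : ℝ)) ⁻¹' P from hin) (by linarith) (by linarith) hout₁ hout₂
  exact hline hslope
end
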